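/- Let V, V' : ℤ^d → ℝ (d ≥ 3) be finitely supported with ‖G|V|‖_∞ < 1, ‖G|V'|‖_∞ < 1, and additionally ‖(I − G|V|)^{-1} G|V' − V|‖_∞ < 1. Then γ_{V'} = (I − (I − GV)^{-1} G (V' − V))^{-1} γ_V. -/

import Mathlib

open scoped BigOperators

noncomputable section

/-- Points of the lattice `ℤ^d`. -/
abbrev Zd (d : ℕ) := Fin d → ℤ

/-- One-step transition kernel of simple random walk on `ℤ^d`. -/
def srwStep (d : ℕ) (x y : Zd d) : ℝ :=
  if (∑ i, |x i - y i|) = 1 then 1 / (2 * (d : ℝ)) else 0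

/-- `n`-step transition probabilities of simple random walk on `ℤ^d`. -/
def srwP (d : ℕ) : ℕ → Zd d → Zd d → ℝ
  | 0, x, y => if x = y then 1 else 0
  | n + 1, x, y => ∑' z : Zd d, srwP d n x z * srwStep d z y

/-- Green function of the (continuous-time) simple random walk on `ℤ^d`,
`g(x,y) = E_x[∫_0^∞ 1{X_s = y} ds] = ∑_n p_n(x,y)`. -/
def green (d : ℕ) (x y : Zd d) : ℝ := ∑' n : ℕ, srwP d n x y

/-- The Green operator `G f (x) = ∑_y g(x,y) f(y)`. -/
def Gop (d : ℕ) (f : Zd d → ℝ) (x : Zd d) : ℝ := ∑' y : Zd d, green d x y * f y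

/-- The operator `GV : f ↦ G(V·f)` (composition of `G` with multiplication by `V`). -/
def GVop (d : ℕ) (V f : Zd d → ℝ) : Zd d → ℝ := Gop d fun y => V y * f y

/-- Neumann series representation of `(I - GV)⁻¹` applied to `h`
(valid when the operator norm `‖G|V|‖_∞` is `< 1`). -/
def neumann (d : ℕ) (V h : Zd d → ℝ) (x : Zd d) : ℝ := ∑' n : ℕ, (GVop d V)^[n] h x

/-- The gaugeFn function `γ_V = (I - GV)⁻¹ 1`. -/
def gaugeFn (d : ℕ) (V : Zd d → ℝ) : Zd d → ℝ := neumann d V fun _ => 1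

/-- The condition `‖G|V|‖_∞ < 1`. -/
def greenNormLtOne (d : ℕ) (V : Zd d → ℝ) : Prop :=
  ∃ c : ℝ, c < 1 ∧ ∀ x, Gop d (fun y => |V y|) x ≤ c

/-- The pairing `⟨u,v⟩_{ℤ^d} = ∑_z u(z) v(z)`. -/
def pairZ (d : ℕ) (u v : Zd d → ℝ) : ℝ := ∑' z : Zd d, u z * v z

/-- The discrete Dirichlet form `𝓔_{ℤ^d}(f,g) = (1/(4d)) ∑_{x∼y} (f(y)-f(x))(g(y)-g(x))`. -/
def dirichletZ (d : ℕ) (f g : Zd d → ℝ) : ℝ :=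
  (1 / (4 * (d : ℝ))) * ∑' p : Zd d × Zd d,
    if (∑ i, |p.1 i - p.2 i|) = 1 then (f p.2 - f p.1) * (g p.2 - g p.1) else 0

/-- The sup norm `‖f‖_∞` of a function on `ℤ^d`. -/
def supNorm (d : ℕ) (f : Zd d → ℝ) : ℝ := ⨆ x, |f x|

/-!
On bounded functions, `A = GV` and `B = G(V' - V)` are bounded operators, `‖A‖ < 1` and
`‖A + B‖ = ‖GV'‖ < 1`, so `γ_V = (1 - A)⁻¹ 1` and `γ_{V'} = (1 - A - B)⁻¹ 1` with the inverses
given by Neumann series. The factorisation `1 - A - B = (1 - A)(1 - T)` with `T = (1 - A)⁻¹ B`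
gives `(1 - A - B)⁻¹ = (1 - T)⁻¹ (1 - A)⁻¹`, and `(1 - T)⁻¹` is again a Neumann series because
`‖T‖ < 1`: dominating `(GV)ⁿ` termwise by `(G|V|)ⁿ` and `GW f` by `‖f‖ G|W|` bounds `|T f|` by
`‖f‖ (1 - G|V|)⁻¹ G|W|`.
-/

open scoped BoundedContinuousFunction

section GeomSeries

variable {R : Type*} [NormedRing R] [HasSummableGeomSeries R]

theorem geom_series_add_eq {a b : R} (ha : ‖a‖ < 1) (hab : ‖a + b‖ < 1)
    (ht : ‖(∑' n, a ^ n) * b‖ < 1) :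
    ∑' n, (a + b) ^ n = (∑' n, ((∑' n, a ^ n) * b) ^ n) * ∑' n, a ^ n := by
  set r := ∑' n, a ^ n
  set v := ∑' n, (r * b) ^ n
  have hleft : v * r * (1 - (a + b)) = 1 := by
    calc v * r * (1 - (a + b)) = v * (r * (1 - a) - r * b) := by noncomm_ring
      _ = v * (1 - r * b) := by rw [geom_series_mul_neg a ha]
      _ = 1 := geom_series_mul_neg _ ht
  calc ∑' n, (a + b) ^ n = v * r * (1 - (a + b)) * ∑' n, (a + b) ^ n := by
        rw [hleft, one_mul]
    _ = v * r := by rw [mul_assoc, mul_neg_geom_series _ hab, mul_one]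

end GeomSeries

section BoundedOperators

variable {α : Type*} [TopologicalSpace α]

theorem BoundedContinuousFunction.coe_pow_apply_eq_iterate
    {Λ : (α →ᵇ ℝ) →L[ℝ] (α →ᵇ ℝ)} {F : (α → ℝ) → α → ℝ} (hΛ : ∀ f, ⇑(Λ f) = F f)
    (n : ℕ) (f : α →ᵇ ℝ) : ⇑((Λ ^ n) f) = F^[n] f := by
  induction n with
  | zero => rfl
  | succ n ih => rw [pow_succ', mul_apply_eq_comp, hΛ, ih, Function.iterate_succ_apply']

theorem BoundedContinuousFunction.hasSum_iterate_apply
    {Λ : (α →ᵇ ℝ) →L[ℝ] (α →ᵇ ℝ)} {F : (α → ℝ) → α → ℝ} (hΛ : ∀ f, ⇑(Λ f) = F f)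
    (hnorm : ‖Λ‖ < 1) (g : α →ᵇ ℝ) (x : α) :
    HasSum (fun n => F^[n] g x) ((∑' n, Λ ^ n) g x) := by
  have h := (summable_geometric_of_norm_lt_one (K := (α →ᵇ ℝ) →L[ℝ] (α →ᵇ ℝ))
    hnorm).hasSum.mapL
    ((BoundedContinuousFunction.evalCLM ℝ x).comp (ContinuousLinearMap.apply ℝ (α →ᵇ ℝ) g))
  simpa only [ContinuousLinearMap.comp_apply, ContinuousLinearMap.apply_apply,
    BoundedContinuousFunction.evalCLM_apply, coe_pow_apply_eq_iterate hΛ] using h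

end BoundedOperators

theorem Function.support_abs {ι : Type*} (u : ι → ℝ) : (fun y => |u y|).support = u.support := by
  ext; simp

theorem srwStep_nonneg (d : ℕ) (x y : Zd d) : 0 ≤ srwStep d x y := by
  unfold srwStep; split_ifs <;> positivity

theorem srwP_nonneg (d n : ℕ) (x y : Zd d) : 0 ≤ srwP d n x y := by
  induction n generalizing y with
  | zero => unfold srwP; split_ifs <;> norm_num
  | succ n ih => exact tsum_nonneg fun z => mul_nonneg (ih z) (srwStep_nonneg d z y)

theorem green_nonneg (d : ℕ) (x y : Zd d) : 0 ≤ green d x y :=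
  tsum_nonneg fun n => srwP_nonneg d n x y

section GreenOperator

variable {d : ℕ} {u v : Zd d → ℝ}

theorem Gop_nonneg (hu : ∀ y, 0 ≤ u y) (x : Zd d) : 0 ≤ Gop d u x :=
  tsum_nonneg fun y => mul_nonneg (green_nonneg d x y) (hu y)

theorem summable_green_mul (hu : u.support.Finite) (x : Zd d) :
    Summable fun y => green d x y * u y :=
  summable_of_hasFiniteSupport (hu.subset (Function.support_mul_subset_right _ _))

theorem Gop_add (hu : u.support.Finite) (hv : v.support.Finite) (x : Zd d) :
    Gop d (fun y => u y + v y) x = Gop d u x + Gop d v x := by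
  simp only [Gop, mul_add]
  exact (summable_green_mul hu x).tsum_add (summable_green_mul hv x)

theorem Gop_mono (hu : u.support.Finite) (hv : v.support.Finite) (huv : ∀ y, u y ≤ v y)
    (x : Zd d) : Gop d u x ≤ Gop d v x :=
  (summable_green_mul hu x).tsum_le_tsum
    (fun y => mul_le_mul_of_nonneg_left (huv y) (green_nonneg d x y)) (summable_green_mul hv x)

theorem abs_Gop_le (hu : u.support.Finite) (x : Zd d) :
    |Gop d u x| ≤ Gop d (fun y => |u y|) x := by
  have habs : (fun y => green d x y * |u y|) = fun y => ‖green d x y * u y‖ := by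
    ext y; rw [Real.norm_eq_abs, abs_mul, abs_of_nonneg (green_nonneg d x y)]
  rw [← Real.norm_eq_abs, Gop, Gop, habs]
  exact norm_tsum_le_tsum_norm ((summable_green_mul hu x).norm)

theorem Gop_abs_sub_le (hu : u.support.Finite) (hv : v.support.Finite) (x : Zd d) :
    Gop d (fun y => |u y - v y|) x ≤ Gop d (fun y => |u y|) x + Gop d (fun y => |v y|) x := by
  have hu' : (fun y => |u y|).support.Finite := (Function.support_abs u).symm ▸ hu
  have hv' : (fun y => |v y|).support.Finite := (Function.support_abs v).symm ▸ hv
  have hsub : (fun y => |u y - v y|).support.Finite := by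
    rw [Function.support_abs]; exact (hu.union hv).subset (Function.support_sub u v)
  rw [← Gop_add hu' hv']
  exact Gop_mono hsub ((hu'.union hv').subset (Function.support_add _ _)) (fun y => abs_sub _ _) x

end GreenOperator

section PotentialOperator

variable {d : ℕ} {U V W : Zd d → ℝ}

theorem GVop_const (V : Zd d → ℝ) (a : ℝ) (x : Zd d) :
    GVop d V (fun _ => a) x = a * Gop d V x := by
  simp only [GVop, Gop, ← tsum_mul_left]
  exact tsum_congr fun y => by ring

theorem GVop_add_left (hV : V.support.Finite) (hW : W.support.Finite) (f : Zd d → ℝ)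
    (x : Zd d) : GVop d (fun y => V y + W y) f x = GVop d V f x + GVop d W f x := by
  simp only [GVop, add_mul]
  exact Gop_add (hV.subset (Function.support_mul_subset_left _ _))
    (hW.subset (Function.support_mul_subset_left _ _)) x

theorem GVop_add_right (hV : V.support.Finite) (f g : Zd d → ℝ) :
    GVop d V (f + g) = GVop d V f + GVop d V g := by
  ext x
  simp only [GVop, Pi.add_apply, mul_add]
  exact Gop_add (hV.subset (Function.support_mul_subset_left _ _))
    (hV.subset (Function.support_mul_subset_left _ _)) x

theorem GVop_smul (V : Zd d → ℝ) (a : ℝ) (f : Zd d → ℝ) :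
    GVop d V (a • f) = a • GVop d V f := by
  ext x
  simp only [GVop, Gop, Pi.smul_apply, smul_eq_mul, ← tsum_mul_left]
  exact tsum_congr fun y => by ring

theorem abs_GVop_le (hV : V.support.Finite) {f g : Zd d → ℝ} (hfg : ∀ y, |f y| ≤ g y)
    (x : Zd d) : |GVop d V f x| ≤ GVop d (fun y => |V y|) g x := by
  have hVf : (fun y => V y * f y).support.Finite :=
    hV.subset (Function.support_mul_subset_left _ _)
  have hVg : (fun y => |V y| * g y).support.Finite :=
    hV.subset ((Function.support_mul_subset_left _ _).trans (Function.support_abs V).le)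
  calc |GVop d V f x| ≤ Gop d (fun y => |V y * f y|) x := abs_Gop_le hVf x
    _ ≤ GVop d (fun y => |V y|) g x := Gop_mono (by rwa [Function.support_abs]) hVg
        (fun y => by rw [abs_mul]; exact mul_le_mul_of_nonneg_left (hfg y) (abs_nonneg _)) x

theorem abs_GVop_le_norm_mul (hV : V.support.Finite) (f : Zd d →ᵇ ℝ) (x : Zd d) :
    |GVop d V f x| ≤ ‖f‖ * Gop d (fun y => |V y|) x := by
  rw [← GVop_const]
  exact abs_GVop_le hV (fun y => f.norm_coe_le_norm y) x

theorem abs_iterate_GVop_le (hV : V.support.Finite) {f g : Zd d → ℝ} (hfg : ∀ y, |f y| ≤ g y)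
    (n : ℕ) (x : Zd d) : |(GVop d V)^[n] f x| ≤ (GVop d (fun y => |V y|))^[n] g x := by
  induction n generalizing x with
  | zero => exact hfg x
  | succ n ih =>
    rw [Function.iterate_succ_apply', Function.iterate_succ_apply']
    exact abs_GVop_le hV ih x

theorem neumann_abs_nonneg (hV : V.support.Finite) {g : Zd d → ℝ} (hg : ∀ y, 0 ≤ g y)
    (x : Zd d) : 0 ≤ neumann d (fun y => |V y|) g x :=
  tsum_nonneg fun n => (abs_nonneg _).trans
    (abs_iterate_GVop_le hV (fun y => (abs_of_nonneg (hg y)).le) n x)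

theorem nonneg_of_forall_Gop_abs_le {c : ℝ} (hc : ∀ x, Gop d (fun y => |V y|) x ≤ c) : 0 ≤ c :=
  (Gop_nonneg (fun y => abs_nonneg (V y)) 0).trans (hc 0)

theorem norm_GVop_le (hV : V.support.Finite) {c : ℝ} (hc : ∀ x, Gop d (fun y => |V y|) x ≤ c)
    (f : Zd d →ᵇ ℝ) (x : Zd d) : ‖GVop d V f x‖ ≤ ‖f‖ * c :=
  (abs_GVop_le_norm_mul hV f x).trans (mul_le_mul_of_nonneg_left (hc x) (norm_nonneg f))

variable (V) in
def gvCLM (hV : V.support.Finite) (c : ℝ) (hc : ∀ x, Gop d (fun y => |V y|) x ≤ c) :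
    (Zd d →ᵇ ℝ) →L[ℝ] (Zd d →ᵇ ℝ) :=
  LinearMap.mkContinuous
    { toFun := fun f => BoundedContinuousFunction.ofNormedAddCommGroupDiscrete (GVop d V f)
        (‖f‖ * c) (norm_GVop_le hV hc f)
      map_add' := fun f g => by ext x; exact congrFun (GVop_add_right hV f g) x
      map_smul' := fun a f => by ext x; exact congrFun (GVop_smul V a f) x }
    c fun f => (BoundedContinuousFunction.norm_ofNormedAddCommGroup_le _
      (mul_nonneg (norm_nonneg f) (nonneg_of_forall_Gop_abs_le hc))
      (norm_GVop_le hV hc f)).trans_eq (mul_comm _ _)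

variable {hV : V.support.Finite} {c : ℝ} {hc : ∀ x, Gop d (fun y => |V y|) x ≤ c}

theorem coe_gvCLM_apply (f : Zd d →ᵇ ℝ) : ⇑(gvCLM V hV c hc f) = GVop d V f := rfl

theorem norm_gvCLM_le : ‖gvCLM V hV c hc‖ ≤ c :=
  LinearMap.mkContinuous_norm_le _ (nonneg_of_forall_Gop_abs_le hc) _

theorem gvCLM_eq_add {hU : U.support.Finite} {cU : ℝ} {hcU : ∀ x, Gop d (fun y => |U y|) x ≤ cU}
    {hW : W.support.Finite} {cW : ℝ} {hcW : ∀ x, Gop d (fun y => |W y|) x ≤ cW}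
    (hUVW : ∀ y, U y = V y + W y) : gvCLM U hU cU hcU = gvCLM V hV c hc + gvCLM W hW cW hcW := by
  ext f x
  rw [add_apply, BoundedContinuousFunction.add_apply, coe_gvCLM_apply,
    coe_gvCLM_apply, coe_gvCLM_apply, ← GVop_add_left hV hW, show U = fun y => V y + W y from
    funext hUVW]

theorem neumann_eq_tsum_pow_apply (hc1 : c < 1) (g : Zd d →ᵇ ℝ) (x : Zd d) :
    neumann d V g x = (∑' n, gvCLM V hV c hc ^ n) g x :=
  (BoundedContinuousFunction.hasSum_iterate_apply coe_gvCLM_apply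
    (norm_gvCLM_le.trans_lt hc1) g x).tsum_eq

theorem norm_tsum_pow_mul_gvCLM_le (hc1 : c < 1) {hW : W.support.Finite} {cW : ℝ}
    {hcW : ∀ x, Gop d (fun y => |W y|) x ≤ cW} {c' : ℝ}
    (hinv : ∀ x, neumann d (fun y => |V y|) (Gop d fun y => |W y|) x ≤ c') :
    ‖(∑' n, gvCLM V hV c hc ^ n) * gvCLM W hW cW hcW‖ ≤ c' := by
  have hGW_nonneg : ∀ x, 0 ≤ Gop d (fun y => |W y|) x := Gop_nonneg fun y => abs_nonneg (W y)
  have hc' : 0 ≤ c' := (neumann_abs_nonneg hV hGW_nonneg 0).trans (hinv 0)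
  have habsV : (fun y => |V y|).support.Finite := (Function.support_abs V).symm ▸ hV
  have habsc : ∀ x, Gop d (fun y => |(|V y|)|) x ≤ c := by simpa only [abs_abs] using hc
  let gW : Zd d →ᵇ ℝ := BoundedContinuousFunction.ofNormedAddCommGroupDiscrete
    (Gop d fun y => |W y|) cW fun x => by
      rw [Real.norm_eq_abs, abs_of_nonneg (hGW_nonneg x)]; exact hcW x
  refine ContinuousLinearMap.opNorm_le_bound _ hc' fun f =>
    (BoundedContinuousFunction.norm_le (by positivity)).2 fun x => ?_
  have hdom : HasSum (fun n => (GVop d fun y => |V y|)^[n] ⇑(‖f‖ • gW) x)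
      (‖f‖ * neumann d (fun y => |V y|) (Gop d fun y => |W y|) x) := by
    have h := BoundedContinuousFunction.hasSum_iterate_apply (coe_gvCLM_apply (hV := habsV))
      ((norm_gvCLM_le (hc := habsc)).trans_lt hc1) (‖f‖ • gW) x
    rwa [map_smul, BoundedContinuousFunction.smul_apply, ← neumann_eq_tsum_pow_apply hc1,
      smul_eq_mul] at h
  calc ‖((∑' n, gvCLM V hV c hc ^ n) * gvCLM W hW cW hcW) f x‖
      = ‖∑' n, (GVop d V)^[n] (GVop d W f) x‖ := by
        rw [mul_apply_eq_comp, ← neumann_eq_tsum_pow_apply hc1]; rfl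
    _ ≤ ‖f‖ * neumann d (fun y => |V y|) (Gop d fun y => |W y|) x :=
        tsum_of_norm_bounded hdom
          (abs_iterate_GVop_le hV (fun y => abs_GVop_le_norm_mul hW f y) · x)
    _ ≤ c' * ‖f‖ := by rw [mul_comm]; exact mul_le_mul_of_nonneg_right (hinv x) (norm_nonneg f)

end PotentialOperator

theorem gauge_perturbation_explicit_general (d : ℕ) (V V' : Zd d → ℝ)
    (hVfin : (Function.support V).Finite) (hV'fin : (Function.support V').Finite)
    (hV : greenNormLtOne d V) (hV' : greenNormLtOne d V')
    (hinv : ∃ c : ℝ, c < 1 ∧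
      ∀ x, neumann d (fun y => |V y|) (Gop d fun y => |V' y - V y|) x ≤ c) :
    ∀ x, gaugeFn d V' x
      = ∑' n : ℕ,
          (fun f : Zd d → ℝ => neumann d V (Gop d fun y => (V' y - V y) * f y))^[n]
            (gaugeFn d V) x := by
  obtain ⟨c, hc1, hc⟩ := hV
  obtain ⟨c', hc'1, hc'⟩ := hV'
  obtain ⟨c'', hc''1, hinv⟩ := hinv
  have hWfin : (Function.support fun y => V' y - V y).Finite :=
    (hV'fin.union hVfin).subset (Function.support_sub V' V)
  have hcW : ∀ x, Gop d (fun y => |V' y - V y|) x ≤ c' + c :=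
    fun x => (Gop_abs_sub_le hV'fin hVfin x).trans (add_le_add (hc' x) (hc x))
  set A := gvCLM V hVfin c hc
  set B := gvCLM (fun y => V' y - V y) hWfin _ hcW
  set R := ∑' n, A ^ n
  have hA' : gvCLM V' hV'fin c' hc' = A + B := gvCLM_eq_add fun y => by ring
  have hT : ‖R * B‖ < 1 := (norm_tsum_pow_mul_gvCLM_le hc1 hinv).trans_lt hc''1
  have hTcoe : ∀ f, ⇑((R * B) f) = neumann d V (Gop d fun y => (V' y - V y) * f y) :=
    fun f => funext fun x => (neumann_eq_tsum_pow_apply hc1 (B f) x).symm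
  have hγ : gaugeFn d V = ⇑(R 1) := funext (neumann_eq_tsum_pow_apply hc1 1)
  intro x
  calc gaugeFn d V' x = (∑' n, (A + B) ^ n) 1 x := hA' ▸ neumann_eq_tsum_pow_apply hc'1 1 x
    _ = (∑' n, (R * B) ^ n) (R 1) x := by
        rw [geom_series_add_eq (R := (Zd d →ᵇ ℝ) →L[ℝ] (Zd d →ᵇ ℝ))
          (norm_gvCLM_le.trans_lt hc1) (hA' ▸ norm_gvCLM_le.trans_lt hc'1) hT, mul_apply_eq_comp]
    _ = _ := by
        rw [hγ]
        exact (BoundedContinuousFunction.hasSum_iterate_apply hTcoe hT (R 1) x).tsum_eq.symm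

/-- Explicit perturbation formula:
`γ_{V'} = (I − (I − GV)⁻¹ G(V' − V))⁻¹ γ_V`, where the outer inverse is given by its
Neumann series (justified by the hypothesis `‖(I − G|V|)⁻¹ G|V' − V|‖_∞ < 1`). -/
theorem gauge_perturbation_explicit (d : ℕ) (hd : 3 ≤ d) (V V' : Zd d → ℝ)
    (hVfin : (Function.support V).Finite) (hV'fin : (Function.support V').Finite)
    (hV : greenNormLtOne d V) (hV' : greenNormLtOne d V')
    (hinv : ∃ c : ℝ, c < 1 ∧
      ∀ x, neumann d (fun y => |V y|) (Gop d fun y => |V' y - V y|) x ≤ c) :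
    ∀ x, gaugeFn d V' x
      = ∑' n : ℕ,
          (fun f : Zd d → ℝ => neumann d V (Gop d fun y => (V' y - V y) * f y))^[n]
            (gaugeFn d V) x :=
  gauge_perturbation_explicit_general d V V' hVfin hV'fin hV hV' hinv
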